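/- Let 0<q<1 and ν real, and let g(z) = z·(-q^{2ν+2}z²;q²)_∞/(-z²;q²)_∞. Then g satisfies z²(q·g(z) - q^{2ν+2} g(qz)) = -q·g(z) + g(qz) for all complex z where defined. -/

import Mathlib

/-!
Shifting the index of the product gives `(x;Q)_∞ = (1 - x) (xQ;Q)_∞`. With `Q = q²`, replacing
`z` by `qz` multiplies `z²` by `Q`, so numerator and denominator of `g(z)` each split off one
linear factor: `q (1 + z²) g(z) = (1 + q^{2ν+2} z²) g(qz)`, which is the identity rearranged.
-/

/-- The infinite q-Pochhammer symbol `(x;q)_∞ = ∏_{n≥0} (1 - x q^n)`. -/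
noncomputable def qp (q x : ℂ) : ℂ := ∏' n : ℕ, (1 - x * q ^ n)

/-- `g(z) = z · (-q^{2ν+2}z²;q²)_∞ / (-z²;q²)_∞`. -/
noncomputable def gg (q ν : ℝ) (z : ℂ) : ℂ :=
  z * qp ((q : ℂ) ^ 2) (-(((q ^ (2 * ν + 2) : ℝ) : ℂ) * z ^ 2)) /
    qp ((q : ℂ) ^ 2) (-(z ^ 2))

lemma multipliable_one_sub_mul_pow {Q : ℂ} (hQ : ‖Q‖ < 1) (x : ℂ) :
    Multipliable fun n : ℕ => 1 - x * Q ^ n := by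
  have hsum : Summable fun n : ℕ => ‖-(x * Q ^ n)‖ := by
    simpa only [norm_neg, norm_mul, norm_pow] using
      (summable_geometric_of_lt_one (norm_nonneg Q) hQ).mul_left ‖x‖
  simpa only [← sub_eq_add_neg] using multipliable_one_add_of_summable hsum

lemma qp_eq_one_sub_mul_qp {Q : ℂ} (hQ : ‖Q‖ < 1) (x : ℂ) :
    qp Q x = (1 - x) * qp Q (x * Q) := by
  have hshift : Multipliable fun n : ℕ => 1 - x * Q ^ (n + 1) :=
    (multipliable_one_sub_mul_pow hQ (x * Q)).congr fun n => by ring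
  rw [qp, qp, tprod_eq_zero_mul' (f := fun n => 1 - x * Q ^ n) hshift, pow_zero, mul_one]
  exact congrArg _ (tprod_congr fun n => by ring)

lemma qp_sq_neg_mul_sq_eq {q : ℝ} (hq : |q| < 1) (a z : ℂ) :
    qp ((q : ℂ) ^ 2) (-(a * z ^ 2)) =
      (1 + a * z ^ 2) * qp ((q : ℂ) ^ 2) (-(a * ((q : ℂ) * z) ^ 2)) := by
  have hQ : ‖(q : ℂ) ^ 2‖ < 1 := by
    rw [norm_pow, Complex.norm_real, Real.norm_eq_abs]
    exact pow_lt_one₀ (abs_nonneg q) hq two_ne_zero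
  rw [qp_eq_one_sub_mul_qp hQ]
  ring_nf

lemma mul_one_add_sq_mul_gg {q : ℝ} (ν : ℝ) (hq : |q| < 1) {z : ℂ}
    (hden : qp ((q : ℂ) ^ 2) (-(z ^ 2)) ≠ 0) :
    (q : ℂ) * (1 + z ^ 2) * gg q ν z =
      (1 + ((q ^ (2 * ν + 2) : ℝ) : ℂ) * z ^ 2) * gg q ν ((q : ℂ) * z) := by
  have hden_split := qp_sq_neg_mul_sq_eq hq 1 z
  simp only [one_mul] at hden_split
  rw [hden_split, mul_ne_zero_iff] at hden
  obtain ⟨hfactor, hden_shift⟩ := hden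
  rw [gg, gg, hden_split, qp_sq_neg_mul_sq_eq hq]
  field_simp

theorem stmt14_general (q ν : ℝ) (hq0 : 0 < q) (hq1 : q < 1) (z : ℂ)
    (hden : qp ((q : ℂ) ^ 2) (-(z ^ 2)) ≠ 0) :
    z ^ 2 * ((q : ℂ) * gg q ν z - ((q ^ (2 * ν + 2) : ℝ) : ℂ) * gg q ν ((q : ℂ) * z)) =
      -(q : ℂ) * gg q ν z + gg q ν ((q : ℂ) * z) := by
  have hq : |q| < 1 := abs_lt.mpr ⟨by linarith, hq1⟩
  linear_combination mul_one_add_sq_mul_gg ν hq hden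

theorem stmt14 (q ν : ℝ) (hq0 : 0 < q) (hq1 : q < 1) (z : ℂ)
    (hden : qp ((q : ℂ) ^ 2) (-(z ^ 2)) ≠ 0)
    (hden' : qp ((q : ℂ) ^ 2) (-(((q : ℂ) * z) ^ 2)) ≠ 0) :
    z ^ 2 * ((q : ℂ) * gg q ν z - ((q ^ (2 * ν + 2) : ℝ) : ℂ) * gg q ν ((q : ℂ) * z)) =
      -(q : ℂ) * gg q ν z + gg q ν ((q : ℂ) * z) :=
  stmt14_general q ν hq0 hq1 z hden
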